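/- arXiv:2308.12505 — 3 statements merged into one kernel-verified Lean document; each statement's English description precedes it below -/
import Mathlib

section
/- Let f = h·conj(g) be a sense-preserving logharmonic mapping with dilatation ω = g'h/(gh'), and ψ analytic with ψ' = h'g. If ψ is a convex univalent mapping of 𝔻, then ‖P_f‖ ≤ 5. -/
open Complex Metric Set

def unitDisk : Set ℂ := Metric.ball 0 1

noncomputable def logPreSch (h g ω : ℂ → ℂ) : ℂ → ℂ := fun z =>
  deriv (deriv h) z / deriv h z + deriv g z / g z -
    (starRingEnd ℂ) (ω z) * deriv ω z / ((1 - ‖ω z‖ ^ 2 : ℝ) : ℂ)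

def normSet (P : ℂ → ℂ) : Set ℝ :=
  {r | ∃ z ∈ unitDisk, r = (1 - ‖z‖ ^ 2) * ‖P z‖}

/-!
Since `ψ' = h'g`, the first two terms of `P_f` add up to `ψ''/ψ'`, so
`P_f = ψ''/ψ' - ω̄ω'/(1 - |ω|²)`. By Schwarz–Pick, `(1 - |z|²)|ω'(z)| ≤ 1 - |ω(z)|²`, so the
second term contributes at most `|ω(z)| < 1`.

For the first term, precompose `ψ` with the disk automorphism sending `0` to `z`. The result `F`
is still convex univalent. By convexity the even part `(F(ζ) + F(-ζ))/2` is subordinate to `F`,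
through an even Schwarz function `w`. Comparing second derivatives at `0` gives
`F''(0) = F'(0) w''(0)`, and `|w''(0)| ≤ 2` by Schwarz's lemma applied to `w(ζ)/ζ`. Hence
`|F''(0)| ≤ 2|F'(0)|`, which unwinds to `(1 - |z|²)|ψ''/ψ'| ≤ 2 + 2|z| ≤ 4`.
-/

open Filter Topology
open scoped ComplexConjugate

theorem one_sub_norm_sq_pos {E : Type*} [SeminormedAddGroup E] {a : E} (ha : ‖a‖ < 1) :
    0 < 1 - ‖a‖ ^ 2 :=
  sub_pos.2 (pow_lt_one₀ (norm_nonneg a) ha two_ne_zero)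

section ChainRule

variable {𝕜 : Type*} [NontriviallyNormedField 𝕜] [CompleteSpace 𝕜]

theorem deriv_deriv_comp {F w : 𝕜 → 𝕜} {c : 𝕜} (hF : AnalyticAt 𝕜 F (w c))
    (hw : AnalyticAt 𝕜 w c) :
    deriv (deriv (F ∘ w)) c =
      deriv (deriv F) (w c) * deriv w c ^ 2 + deriv F (w c) * deriv (deriv w) c := by
  have hderiv : deriv (F ∘ w) =ᶠ[𝓝 c] fun z => deriv F (w z) * deriv w z := by
    filter_upwards [hw.continuousAt.eventually hF.eventually_analyticAt,
      hw.eventually_analyticAt] with z hFz hwz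
    exact deriv_comp z hFz.differentiableAt hwz.differentiableAt
  have hprod : HasDerivAt (fun z => deriv F (w z) * deriv w z)
      (deriv (deriv F) (w c) * deriv w c * deriv w c + deriv F (w c) * deriv (deriv w) c) c :=
    (hF.deriv.differentiableAt.hasDerivAt.comp c hw.differentiableAt.hasDerivAt).mul
      hw.deriv.differentiableAt.hasDerivAt
  rw [hderiv.deriv_eq, hprod.deriv]
  ring

end ChainRule

section DiskMobius

noncomputable def diskMobius (a z : ℂ) : ℂ := (z + a) / (1 + conj a * z)

variable {a z : ℂ}

theorem one_add_conj_mul_ne_zero (ha : ‖a‖ < 1) (hz : ‖z‖ < 1) : 1 + conj a * z ≠ 0 := by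
  have hlt : ‖conj a * z‖ < 1 := by
    rw [norm_mul, RCLike.norm_conj]
    nlinarith [norm_nonneg a, norm_nonneg z]
  intro h
  rw [eq_neg_of_add_eq_zero_right h, norm_neg, norm_one] at hlt
  exact hlt.false

theorem normSq_one_add_conj_mul_sub_normSq_add (a z : ℂ) :
    normSq (1 + conj a * z) - normSq (z + a) = (1 - normSq a) * (1 - normSq z) := by
  simp only [normSq_apply, add_re, add_im, mul_re, mul_im, one_re, one_im, conj_re, conj_im]
  ring

theorem norm_diskMobius_lt_one (ha : ‖a‖ < 1) (hz : ‖z‖ < 1) : ‖diskMobius a z‖ < 1 := by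
  have hpos : 0 < (1 - normSq a) * (1 - normSq z) := by
    rw [← Complex.sq_norm, ← Complex.sq_norm]
    exact mul_pos (one_sub_norm_sq_pos ha) (one_sub_norm_sq_pos hz)
  have hlt : ‖z + a‖ ^ 2 < ‖1 + conj a * z‖ ^ 2 := by
    rw [Complex.sq_norm, Complex.sq_norm]
    linarith [normSq_one_add_conj_mul_sub_normSq_add a z]
  rw [diskMobius, norm_div, div_lt_one (norm_pos_iff.2 (one_add_conj_mul_ne_zero ha hz))]
  exact lt_of_pow_lt_pow_left₀ 2 (norm_nonneg _) hlt

theorem diskMobius_zero (a : ℂ) : diskMobius a 0 = a := by simp [diskMobius]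

theorem diskMobius_neg_self (a : ℂ) : diskMobius (-a) a = 0 := by simp [diskMobius]

theorem diskMobius_neg_diskMobius (ha : ‖a‖ < 1) (hz : ‖z‖ < 1) :
    diskMobius (-a) (diskMobius a z) = z := by
  have hden := one_add_conj_mul_ne_zero ha hz
  have hden' : 1 + conj (-a) * diskMobius a z ≠ 0 :=
    one_add_conj_mul_ne_zero (by rwa [norm_neg]) (norm_diskMobius_lt_one ha hz)
  simp only [diskMobius, map_neg] at hden' ⊢
  rw [div_eq_iff hden']
  linear_combination div_mul_cancel₀ (z + a) hden

theorem bijOn_diskMobius (ha : ‖a‖ < 1) : BijOn (diskMobius a) (ball 0 1) (ball 0 1) := by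
  have ha' : ‖-a‖ < 1 := by rwa [norm_neg]
  have hmaps : ∀ {b : ℂ}, ‖b‖ < 1 → MapsTo (diskMobius b) (ball 0 1) (ball 0 1) :=
    fun hb z hz => mem_ball_zero_iff.2 (norm_diskMobius_lt_one hb (mem_ball_zero_iff.1 hz))
  refine InvOn.bijOn ⟨fun z hz => ?_, fun z hz => ?_⟩ (hmaps ha) (hmaps ha')
  · exact diskMobius_neg_diskMobius ha (mem_ball_zero_iff.1 hz)
  · simpa using diskMobius_neg_diskMobius ha' (mem_ball_zero_iff.1 hz)

theorem one_sub_conj_mul_self (a : ℂ) : 1 - conj a * a = ((1 - ‖a‖ ^ 2 : ℝ) : ℂ) := by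
  rw [mul_comm, mul_conj, normSq_eq_norm_sq]
  push_cast
  ring

theorem hasDerivAt_diskMobius (ha : ‖a‖ < 1) (hz : ‖z‖ < 1) :
    HasDerivAt (diskMobius a) ((1 - conj a * a) / (1 + conj a * z) ^ 2) z := by
  have hnum : HasDerivAt (fun w : ℂ => w + a) 1 z := (hasDerivAt_id z).add_const a
  have hden : HasDerivAt (fun w : ℂ => 1 + conj a * w) (conj a) z := by
    simpa using ((hasDerivAt_id z).const_mul (conj a)).const_add 1
  exact (hnum.fun_div hden (one_add_conj_mul_ne_zero ha hz)).congr_deriv (by ring)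

theorem differentiableOn_diskMobius (ha : ‖a‖ < 1) :
    DifferentiableOn ℂ (diskMobius a) (ball 0 1) := fun _ hz =>
  (hasDerivAt_diskMobius ha (mem_ball_zero_iff.1 hz)).differentiableAt.differentiableWithinAt

theorem hasDerivAt_diskMobius_zero (ha : ‖a‖ < 1) :
    HasDerivAt (diskMobius a) ((1 - ‖a‖ ^ 2 : ℝ) : ℂ) 0 := by
  simpa [one_sub_conj_mul_self] using hasDerivAt_diskMobius ha (z := 0) (by simp)

theorem hasDerivAt_diskMobius_neg_self (ha : ‖a‖ < 1) :
    HasDerivAt (diskMobius (-a)) ((1 - ‖a‖ ^ 2 : ℝ) : ℂ)⁻¹ a := by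
  have hx : ((1 - ‖a‖ ^ 2 : ℝ) : ℂ) ≠ 0 := by
    exact_mod_cast (one_sub_norm_sq_pos ha).ne'
  refine (hasDerivAt_diskMobius (by rwa [norm_neg]) ha).congr_deriv ?_
  have hnum : 1 - conj (-a) * -a = ((1 - ‖a‖ ^ 2 : ℝ) : ℂ) := by
    rw [map_neg, neg_mul_neg, one_sub_conj_mul_self]
  have hden : 1 + conj (-a) * a = ((1 - ‖a‖ ^ 2 : ℝ) : ℂ) := by
    rw [map_neg, neg_mul, ← sub_eq_add_neg, one_sub_conj_mul_self]
  rw [hnum, hden]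
  field_simp

theorem deriv_deriv_diskMobius_zero (ha : ‖a‖ < 1) :
    deriv (deriv (diskMobius a)) 0 = -2 * conj a * ((1 - ‖a‖ ^ 2 : ℝ) : ℂ) := by
  have hderiv : deriv (diskMobius a) =ᶠ[𝓝 0]
      fun z => (1 - conj a * a) / (1 + conj a * z) ^ 2 := by
    filter_upwards [isOpen_ball.mem_nhds (mem_ball_self one_pos)] with z hz
    exact (hasDerivAt_diskMobius ha (mem_ball_zero_iff.1 hz)).deriv
  have hden : HasDerivAt (fun z => (1 + conj a * z) ^ 2) (2 * conj a) 0 := by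
    simpa using (((hasDerivAt_id' 0).const_mul (conj a)).const_add 1).fun_pow 2
  rw [hderiv.deriv_eq, ((hasDerivAt_const 0 (1 - conj a * a)).fun_div hden (by simp)).deriv,
    ← one_sub_conj_mul_self]
  simp only [mul_zero, add_zero, one_pow, mul_one, zero_sub, div_one, neg_mul, neg_inj]
  ring

end DiskMobius

theorem one_sub_sq_mul_norm_deriv_le_of_mapsTo_ball {ω : ℂ → ℂ}
    (hd : DifferentiableOn ℂ ω (ball 0 1)) (hmaps : MapsTo ω (ball 0 1) (ball 0 1)) {a : ℂ}
    (ha : ‖a‖ < 1) :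
    (1 - ‖a‖ ^ 2) * ‖deriv ω a‖ ≤ 1 - ‖ω a‖ ^ 2 := by
  set b := ω a
  have hb : ‖b‖ < 1 := mem_ball_zero_iff.1 (hmaps (mem_ball_zero_iff.2 ha))
  have hb' : ‖-b‖ < 1 := by rwa [norm_neg]
  have hy : 0 < 1 - ‖b‖ ^ 2 := one_sub_norm_sq_pos hb
  set W := diskMobius (-b) ∘ ω ∘ diskMobius a
  have hWmaps : MapsTo W (ball 0 1) (ball 0 1) :=
    (bijOn_diskMobius hb').mapsTo.comp (hmaps.comp (bijOn_diskMobius ha).mapsTo)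
  have hWd : DifferentiableOn ℂ W (ball 0 1) :=
    (differentiableOn_diskMobius hb').comp (hd.comp (differentiableOn_diskMobius ha)
      (bijOn_diskMobius ha).mapsTo) (hmaps.comp (bijOn_diskMobius ha).mapsTo)
  have hW0 : W 0 = 0 := by
    simp only [W, Function.comp_apply, diskMobius_zero]
    exact diskMobius_neg_self b
  have hWderiv : HasDerivAt W
      (((1 - ‖b‖ ^ 2 : ℝ) : ℂ)⁻¹ * (deriv ω a * ((1 - ‖a‖ ^ 2 : ℝ) : ℂ))) 0 := by
    have hωa : HasDerivAt ω (deriv ω a) (diskMobius a 0) := by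
      rw [diskMobius_zero]
      exact (hd.differentiableAt (isOpen_ball.mem_nhds (mem_ball_zero_iff.2 ha))).hasDerivAt
    have hMb : HasDerivAt (diskMobius (-b)) ((1 - ‖b‖ ^ 2 : ℝ) : ℂ)⁻¹
        (ω (diskMobius a 0)) := by
      rw [diskMobius_zero]
      exact hasDerivAt_diskMobius_neg_self hb
    exact hMb.comp 0 (hωa.comp 0 (hasDerivAt_diskMobius_zero ha))
  have hschwarz : ‖deriv W 0‖ ≤ 1 := Complex.norm_deriv_le_one_of_mapsTo_ball hWd
    (by rw [hW0]; exact hWmaps.mono_right ball_subset_closedBall) one_pos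
  rw [hWderiv.deriv, norm_mul, norm_inv, norm_mul, norm_real, norm_real,
    Real.norm_of_nonneg hy.le, Real.norm_of_nonneg (one_sub_norm_sq_pos ha).le,
    inv_mul_le_iff₀ hy] at hschwarz
  linarith

theorem norm_deriv_deriv_le_two_of_mapsTo_ball {w : ℂ → ℂ}
    (hd : DifferentiableOn ℂ w (ball 0 1)) (hmaps : MapsTo w (ball 0 1) (ball 0 1))
    (hw0 : w 0 = 0) (hw0' : deriv w 0 = 0) :
    ‖deriv (deriv w) 0‖ ≤ 2 := by
  have h0 : ball (0 : ℂ) 1 ∈ 𝓝 0 := isOpen_ball.mem_nhds (mem_ball_self one_pos)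
  set w₁ := dslope w 0
  have hw₁d : DifferentiableOn ℂ w₁ (ball 0 1) := (differentiableOn_dslope h0).2 hd
  have hw₁0 : w₁ 0 = 0 := by simp only [w₁, dslope_same, hw0']
  have hw₁maps : MapsTo w₁ (ball 0 1) (closedBall (w₁ 0) 1) := fun z hz => by
    rw [hw₁0, mem_closedBall_zero_iff]
    simpa using Complex.norm_dslope_le_div_of_mapsTo_ball hd
      (by rw [hw0]; exact hmaps.mono_right ball_subset_closedBall) hz
  have hw : w = fun z => z * w₁ z := funext fun z => by
    simpa [hw0] using (sub_smul_dslope w 0 z).symm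
  have hderiv : deriv w =ᶠ[𝓝 0] fun z => w₁ z + z * deriv w₁ z := by
    filter_upwards [h0] with z hz
    rw [hw, ((hasDerivAt_id' z).fun_mul
      (hw₁d.differentiableAt (isOpen_ball.mem_nhds hz)).hasDerivAt).deriv]
    simp
  have hw₁a : AnalyticAt ℂ w₁ 0 := hw₁d.analyticAt h0
  have hsecond : deriv (deriv w) 0 = 2 * deriv w₁ 0 := by
    rw [hderiv.deriv_eq, (hw₁a.differentiableAt.hasDerivAt.fun_add
      ((hasDerivAt_id' 0).fun_mul hw₁a.deriv.differentiableAt.hasDerivAt)).deriv]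
    ring
  rw [hsecond, norm_mul, Complex.norm_two]
  linarith [Complex.norm_deriv_le_one_of_mapsTo_ball hw₁d hw₁maps one_pos]

theorem differentiableOn_of_injOn_comp_eq {F m w : ℂ → ℂ} {U V : Set ℂ} (hU : IsOpen U)
    (hV : IsOpen V) (hF : DifferentiableOn ℂ F U) (hinj : InjOn F U)
    (hF' : ∀ u ∈ U, deriv F u ≠ 0) (hm : DifferentiableOn ℂ m V) (hw : MapsTo w V U)
    (hFw : ∀ z ∈ V, F (w z) = m z) : DifferentiableOn ℂ w V := by
  intro z hz
  have hu : w z ∈ U := hw hz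
  have hstrict : HasStrictDerivAt F (deriv F (w z)) (w z) :=
    (hF.analyticAt (hU.mem_nhds hu)).hasStrictDerivAt
  set G := hstrict.localInverse F _ _ (hF' _ hu)
  have hGd : DifferentiableAt ℂ G (m z) := by
    rw [← hFw z hz]
    exact (hstrict.to_localInverse (hF' _ hu)).hasDerivAt.differentiableAt
  have hGw : G (m z) = w z := by
    rw [← hFw z hz]
    exact HasStrictFDerivAt.localInverse_apply_image ..
  have hmz : Tendsto m (𝓝 z) (𝓝 (m z)) := (hm.differentiableAt (hV.mem_nhds hz)).continuousAt
  have hinv : ∀ᶠ y in 𝓝 (m z), F (G y) = y := by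
    rw [← hFw z hz]
    exact HasStrictDerivAt.eventually_right_inverse ..
  have hGU : ∀ᶠ y in 𝓝 (m z), G y ∈ U :=
    hGd.continuousAt.preimage_mem_nhds (by rw [hGw]; exact hU.mem_nhds hu)
  -- The local inverse `G` of `F` near `w z` agrees with `w` near `z` by injectivity of `F`.
  have hwG : w =ᶠ[𝓝 z] G ∘ m := by
    filter_upwards [hmz.eventually hinv, hmz.eventually hGU, hV.mem_nhds hz] with y h1 h2 hy
    exact hinj (hw hy) h2 (by rw [hFw y hy, Function.comp_apply, h1])
  exact ((hGd.comp z (hm.differentiableAt (hV.mem_nhds hz))).congr_of_eventuallyEq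
    hwG).differentiableWithinAt

theorem exists_even_subordination_of_convex_image {F : ℂ → ℂ}
    (hF : DifferentiableOn ℂ F (ball 0 1)) (hinj : InjOn F (ball 0 1))
    (hconv : Convex ℝ (F '' ball 0 1)) (hF' : ∀ z ∈ ball (0 : ℂ) 1, deriv F z ≠ 0) :
    ∃ w : ℂ → ℂ, DifferentiableOn ℂ w (ball 0 1) ∧ MapsTo w (ball 0 1) (ball 0 1) ∧ w 0 = 0 ∧
      (∀ z, w (-z) = w z) ∧ ∀ z ∈ ball (0 : ℂ) 1, F (w z) = (F z + F (-z)) / 2 := by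
  have hneg : ∀ z ∈ ball (0 : ℂ) 1, -z ∈ ball (0 : ℂ) 1 := fun z hz => by simpa using hz
  have hmid : ∀ z ∈ ball (0 : ℂ) 1, (F z + F (-z)) / 2 ∈ F '' ball 0 1 := fun z hz => by
    convert hconv (mem_image_of_mem F hz) (mem_image_of_mem F (hneg z hz))
      (by norm_num : (0 : ℝ) ≤ 1 / 2) (by norm_num : (0 : ℝ) ≤ 1 / 2) (by norm_num) using 1
    simp only [real_smul]
    push_cast
    ring
  set w := fun z => Function.invFunOn F (ball 0 1) ((F z + F (-z)) / 2)
  have hFw : ∀ z ∈ ball (0 : ℂ) 1, F (w z) = (F z + F (-z)) / 2 :=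
    fun z hz => Function.invFunOn_eq (hmid z hz)
  have hmaps : MapsTo w (ball 0 1) (ball 0 1) := fun z hz => Function.invFunOn_mem (hmid z hz)
  have hm : DifferentiableOn ℂ (fun z => (F z + F (-z)) / 2) (ball 0 1) :=
    (hF.add (hF.comp (differentiableOn_neg _) hneg)).div_const 2
  refine ⟨w, differentiableOn_of_injOn_comp_eq isOpen_ball isOpen_ball hF hinj hF' hm hmaps hFw,
    hmaps, ?_, fun z => ?_, hFw⟩
  · simpa [w] using hinj.leftInvOn_invFunOn (mem_ball_self one_pos)
  · simp only [w, neg_neg]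
    rw [add_comm]

theorem deriv_deriv_even_part {F : ℂ → ℂ} (hF : ContDiffAt ℂ 2 F 0) :
    deriv (deriv fun z => (F z + F (-z)) / 2) 0 = deriv (deriv F) 0 := by
  have htwo : ∀ f : ℂ → ℂ, iteratedDeriv 2 f = deriv (deriv f) := fun f => by
    rw [iteratedDeriv_succ, iteratedDeriv_one]
  have hFneg : ContDiffAt ℂ 2 (fun z => F (-z)) 0 := by
    apply ContDiffAt.comp
    · simpa using hF
    · exact contDiffAt_id.neg
  rw [← htwo, ← htwo, iteratedDeriv_div_const, iteratedDeriv_fun_add hF hFneg,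
    iteratedDeriv_comp_neg]
  simp

theorem norm_deriv_deriv_le_of_convex_image {F : ℂ → ℂ} (hF : DifferentiableOn ℂ F (ball 0 1))
    (hinj : InjOn F (ball 0 1)) (hconv : Convex ℝ (F '' ball 0 1))
    (hF' : ∀ z ∈ ball (0 : ℂ) 1, deriv F z ≠ 0) :
    ‖deriv (deriv F) 0‖ ≤ 2 * ‖deriv F 0‖ := by
  obtain ⟨w, hwd, hwmaps, hw0, hweven, hFw⟩ :=
    exists_even_subordination_of_convex_image hF hinj hconv hF'
  have h0 : ball (0 : ℂ) 1 ∈ 𝓝 0 := isOpen_ball.mem_nhds (mem_ball_self one_pos)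
  have hw0' : deriv w 0 = 0 := by
    have h := deriv_comp_neg (f := w) (x := 0)
    simp only [hweven, neg_zero] at h
    linear_combination h / 2
  have hFa : AnalyticAt ℂ F (w 0) := by rw [hw0]; exact hF.analyticAt h0
  have hcomp : deriv (deriv (F ∘ w)) 0 = deriv F 0 * deriv (deriv w) 0 := by
    rw [deriv_deriv_comp hFa (hwd.analyticAt h0), hw0, hw0']
    ring
  have hsub : F ∘ w =ᶠ[𝓝 0] fun z => (F z + F (-z)) / 2 := by
    filter_upwards [h0] with z hz
    exact hFw z hz
  have hF'' : deriv (deriv F) 0 = deriv F 0 * deriv (deriv w) 0 := by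
    rw [← hcomp, hsub.deriv.deriv_eq, deriv_deriv_even_part (hF.analyticAt h0).contDiffAt]
  rw [hF'', norm_mul, mul_comm]
  exact mul_le_mul_of_nonneg_right
    (norm_deriv_deriv_le_two_of_mapsTo_ball hwd hwmaps hw0 hw0') (norm_nonneg _)

theorem norm_deriv_deriv_mul_sub_le_of_convex_image {ψ : ℂ → ℂ}
    (hψ : DifferentiableOn ℂ ψ (ball 0 1)) (hinj : InjOn ψ (ball 0 1))
    (hconv : Convex ℝ (ψ '' ball 0 1)) (hψ' : ∀ z ∈ ball (0 : ℂ) 1, deriv ψ z ≠ 0) {a : ℂ}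
    (ha : ‖a‖ < 1) :
    ‖deriv (deriv ψ) a * ((1 - ‖a‖ ^ 2 : ℝ) : ℂ) - 2 * conj a * deriv ψ a‖ ≤
      2 * ‖deriv ψ a‖ := by
  have hbij := bijOn_diskMobius ha
  have hx : 0 < 1 - ‖a‖ ^ 2 := one_sub_norm_sq_pos ha
  set x := 1 - ‖a‖ ^ 2
  set F := ψ ∘ diskMobius a
  have hFd : DifferentiableOn ℂ F (ball 0 1) :=
    hψ.comp (differentiableOn_diskMobius ha) hbij.mapsTo
  have hF' : ∀ z ∈ ball (0 : ℂ) 1, deriv F z ≠ 0 := fun z hz => by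
    have hz' := mem_ball_zero_iff.1 hz
    rw [deriv_comp z (hψ.differentiableAt (isOpen_ball.mem_nhds (hbij.mapsTo hz)))
      (hasDerivAt_diskMobius ha hz').differentiableAt, (hasDerivAt_diskMobius ha hz').deriv,
      one_sub_conj_mul_self]
    exact mul_ne_zero (hψ' _ (hbij.mapsTo hz)) (div_ne_zero (by exact_mod_cast hx.ne')
      (pow_ne_zero 2 (one_add_conj_mul_ne_zero ha hz')))
  have hψa : AnalyticAt ℂ ψ (diskMobius a 0) := by
    rw [diskMobius_zero]
    exact hψ.analyticAt (isOpen_ball.mem_nhds (mem_ball_zero_iff.2 ha))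
  have hF0 : deriv F 0 = deriv ψ a * x := by
    rw [deriv_comp 0 hψa.differentiableAt (hasDerivAt_diskMobius_zero ha).differentiableAt,
      (hasDerivAt_diskMobius_zero ha).deriv, diskMobius_zero]
  have hF00 : deriv (deriv F) 0 = x * (deriv (deriv ψ) a * x - 2 * conj a * deriv ψ a) := by
    rw [deriv_deriv_comp hψa ((differentiableOn_diskMobius ha).analyticAt
      (isOpen_ball.mem_nhds (mem_ball_self one_pos))), (hasDerivAt_diskMobius_zero ha).deriv,
      deriv_deriv_diskMobius_zero ha, diskMobius_zero]
    ring
  have hbound := norm_deriv_deriv_le_of_convex_image hFd (hinj.comp hbij.injOn hbij.mapsTo)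
    (by rwa [image_comp, hbij.image_eq]) hF'
  rw [hF0, hF00, norm_mul, norm_mul, norm_real, Real.norm_of_nonneg hx.le] at hbound
  exact le_of_mul_le_mul_left (by linarith) hx

theorem one_sub_sq_mul_norm_logDeriv_deriv_le_four {ψ : ℂ → ℂ}
    (hψ : DifferentiableOn ℂ ψ (ball 0 1)) (hinj : InjOn ψ (ball 0 1))
    (hconv : Convex ℝ (ψ '' ball 0 1)) (hψ' : ∀ z ∈ ball (0 : ℂ) 1, deriv ψ z ≠ 0) {a : ℂ}
    (ha : ‖a‖ < 1) :
    (1 - ‖a‖ ^ 2) * ‖logDeriv (deriv ψ) a‖ ≤ 4 := by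
  have hx : 0 ≤ 1 - ‖a‖ ^ 2 := (one_sub_norm_sq_pos ha).le
  set x := 1 - ‖a‖ ^ 2
  rw [logDeriv_apply, norm_div, ← mul_div_assoc,
    div_le_iff₀ (norm_pos_iff.2 (hψ' a (mem_ball_zero_iff.2 ha)))]
  calc x * ‖deriv (deriv ψ) a‖ = ‖deriv (deriv ψ) a * x‖ := by
        rw [norm_mul, norm_real, Real.norm_of_nonneg hx, mul_comm]
    _ ≤ ‖deriv (deriv ψ) a * x - 2 * conj a * deriv ψ a‖ + ‖2 * conj a * deriv ψ a‖ :=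
        norm_le_norm_sub_add _ _
    _ ≤ 2 * ‖deriv ψ a‖ + 2 * ‖a‖ * ‖deriv ψ a‖ := by
        rw [norm_mul, norm_mul, Complex.norm_two, RCLike.norm_conj]
        exact add_le_add_left
          (norm_deriv_deriv_mul_sub_le_of_convex_image hψ hinj hconv hψ' ha) _
    _ ≤ 4 * ‖deriv ψ a‖ := by nlinarith [norm_nonneg (deriv ψ a)]

theorem one_sub_sq_mul_norm_logDeriv_deriv_sub_le_five {ψ ω : ℂ → ℂ}
    (hψ : DifferentiableOn ℂ ψ (ball 0 1)) (hinj : InjOn ψ (ball 0 1))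
    (hconv : Convex ℝ (ψ '' ball 0 1)) (hψ' : ∀ z ∈ ball (0 : ℂ) 1, deriv ψ z ≠ 0)
    (hω : DifferentiableOn ℂ ω (ball 0 1)) (hωmaps : MapsTo ω (ball 0 1) (ball 0 1)) {a : ℂ}
    (ha : ‖a‖ < 1) :
    (1 - ‖a‖ ^ 2) * ‖logDeriv (deriv ψ) a -
      conj (ω a) * deriv ω a / ((1 - ‖ω a‖ ^ 2 : ℝ) : ℂ)‖ ≤ 5 := by
  have hx : 0 ≤ 1 - ‖a‖ ^ 2 := (one_sub_norm_sq_pos ha).le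
  have hωa : ‖ω a‖ < 1 := mem_ball_zero_iff.1 (hωmaps (mem_ball_zero_iff.2 ha))
  have hy : 0 < 1 - ‖ω a‖ ^ 2 := one_sub_norm_sq_pos hωa
  have hωterm : (1 - ‖a‖ ^ 2) * ‖conj (ω a) * deriv ω a / ((1 - ‖ω a‖ ^ 2 : ℝ) : ℂ)‖ ≤ 1 := by
    rw [norm_div, norm_mul, RCLike.norm_conj, norm_real, Real.norm_of_nonneg hy.le,
      mul_div_assoc', div_le_one hy]
    nlinarith [one_sub_sq_mul_norm_deriv_le_of_mapsTo_ball hω hωmaps ha, norm_nonneg (ω a),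
      norm_nonneg (deriv ω a)]
  calc _ ≤ (1 - ‖a‖ ^ 2) * (‖logDeriv (deriv ψ) a‖ +
        ‖conj (ω a) * deriv ω a / ((1 - ‖ω a‖ ^ 2 : ℝ) : ℂ)‖) :=
        mul_le_mul_of_nonneg_left (norm_sub_le _ _) hx
    _ ≤ 4 + 1 := by
        rw [mul_add]
        exact add_le_add (one_sub_sq_mul_norm_logDeriv_deriv_le_four hψ hinj hconv hψ' ha) hωterm
    _ = 5 := by norm_num

theorem logPreSch_eq_logDeriv_sub {h g ψ ω : ℂ → ℂ} {a : ℂ}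
    (hψ : deriv ψ =ᶠ[𝓝 a] fun z => deriv h z * g z) (hh' : DifferentiableAt ℂ (deriv h) a)
    (hg : DifferentiableAt ℂ g a) (hne : deriv h a * g a ≠ 0) :
    logPreSch h g ω a =
      logDeriv (deriv ψ) a - conj (ω a) * deriv ω a / ((1 - ‖ω a‖ ^ 2 : ℝ) : ℂ) := by
  rw [(logDeriv_congr_nhds hψ).eq_of_nhds,
    logDeriv_mul a (left_ne_zero_of_mul hne) (right_ne_zero_of_mul hne) hh' hg, logPreSch,
    logDeriv_apply, logDeriv_apply]

theorem bddAbove_normSet_and_sSup_le {P : ℂ → ℂ} {C : ℝ}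
    (hP : ∀ z ∈ unitDisk, (1 - ‖z‖ ^ 2) * ‖P z‖ ≤ C) :
    BddAbove (normSet P) ∧ sSup (normSet P) ≤ C := by
  have hle : ∀ r ∈ normSet P, r ≤ C := by
    rintro r ⟨z, hz, rfl⟩
    exact hP z hz
  exact ⟨⟨C, hle⟩, csSup_le ⟨_, 0, mem_ball_self one_pos, rfl⟩ hle⟩

/-- If the analytic function `ψ` with `ψ' = h'g` is a convex univalent mapping of the disk, then the
pre-Schwarzian norm of the logharmonic mapping `f = h ⬝ conj g` satisfies `‖P_f‖ ≤ 5`. -/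
theorem logharmonic_preSchwarzian_le_five (h g ψ ω : ℂ → ℂ)
    (hh : DifferentiableOn ℂ h unitDisk) (hh' : DifferentiableOn ℂ (deriv h) unitDisk)
    (hg : DifferentiableOn ℂ g unitDisk)
    (hψ : DifferentiableOn ℂ ψ unitDisk)
    (hne : ∀ z ∈ unitDisk, deriv h z * g z ≠ 0)
    (hωdef : ∀ z ∈ unitDisk, ω z = deriv g z * h z / (g z * deriv h z))
    (hωmap : ∀ z ∈ unitDisk, ω z ∈ unitDisk)
    (hψeq : ∀ z ∈ unitDisk, deriv ψ z = deriv h z * g z)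
    (hψuniv : Set.InjOn ψ unitDisk)
    (hψconv : Convex ℝ (ψ '' unitDisk)) :
    BddAbove (normSet (logPreSch h g ω)) ∧ sSup (normSet (logPreSch h g ω)) ≤ 5 := by
  have hψ' : ∀ z ∈ unitDisk, deriv ψ z ≠ 0 := fun z hz => hψeq z hz ▸ hne z hz
  have hω : DifferentiableOn ℂ ω unitDisk :=
    (((hg.deriv isOpen_ball).fun_mul hh).fun_div (hg.fun_mul hh') fun z hz =>
      mul_comm (deriv h z) (g z) ▸ hne z hz).congr hωdef
  refine bddAbove_normSet_and_sSup_le fun a ha => ?_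
  have hnhds : unitDisk ∈ 𝓝 a := isOpen_ball.mem_nhds ha
  rw [logPreSch_eq_logDeriv_sub (mem_of_superset hnhds hψeq) (hh'.differentiableAt hnhds)
    (hg.differentiableAt hnhds) (hne a ha)]
  exact one_sub_sq_mul_norm_logDeriv_deriv_sub_le_five hψ hψuniv hψconv hψ' hω hωmap
    (mem_ball_zero_iff.1 ha)
end

section
/- Let f = h·conj(g) be a nonvanishing logharmonic Bloch mapping in 𝔻 with dilatation ω = g'h/(gh'). Then ‖P_f‖ = sup_{z∈𝔻}(1−|z|²)|P_f(z)| is finite if and only if ‖P_h‖ = sup_{z∈𝔻}(1−|z|²)|h''(z)/h'(z)| is finite; and if ‖P_h‖ < ∞ then | ‖P_f‖ − ‖P_h‖ | ≤ β_{log g} + 1, where β_{log g} = sup_{z∈𝔻}(1−|z|²)|g'(z)/g(z)|. -/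
open Complex Metric Set

/-!
Since `P_f - h''/h' = g'/g - ω̄ ω'/(1 - |ω|²)` and, by the Schwarz–Pick lemma,
`(1 - |z|²) |ω'(z)| ≤ 1 - |ω(z)|²`, the weighted quantities `(1 - |z|²) |P_f(z)|` and
`(1 - |z|²) |h''(z)/h'(z)|` differ by at most `(1 - |z|²) |g'(z)/g(z)| + 1 ≤ β_{log g} + 1` at
every point of the disk; both claims follow by taking suprema.
-/

open scoped ComplexConjugate

lemma mem_unitDisk {z : ℂ} : z ∈ unitDisk ↔ ‖z‖ < 1 := mem_ball_zero_iff

lemma isOpen_unitDisk : IsOpen unitDisk := isOpen_ball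

lemma one_sub_norm_sq_pos_s7 {z : ℂ} (hz : z ∈ unitDisk) : 0 < 1 - ‖z‖ ^ 2 :=
  sub_pos.2 (pow_lt_one₀ (norm_nonneg z) (mem_unitDisk.1 hz) two_ne_zero)

section DiskAutomorphism

noncomputable def diskAut (a w : ℂ) : ℂ := (a - w) / (1 - conj a * w)

variable {a w : ℂ}

@[simp] lemma diskAut_zero : diskAut a 0 = a := by simp [diskAut]

@[simp] lemma diskAut_self : diskAut a a = 0 := by simp [diskAut]

lemma one_sub_conj_mul_ne_zero (ha : a ∈ unitDisk) (hw : w ∈ unitDisk) :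
    1 - conj a * w ≠ 0 := by
  have hlt : ‖conj a * w‖ < 1 := by
    rw [norm_mul, RCLike.norm_conj]
    exact mul_lt_one_of_nonneg_of_lt_one_left (norm_nonneg a) (mem_unitDisk.1 ha)
      (mem_unitDisk.1 hw).le
  intro h
  rw [sub_eq_zero] at h
  simp [← h] at hlt

lemma normSq_one_sub_conj_mul_sub_normSq_sub (a w : ℂ) :
    normSq (1 - conj a * w) - normSq (a - w) = (1 - normSq a) * (1 - normSq w) := by
  simp only [normSq_apply, sub_re, sub_im, mul_re, mul_im, conj_re, conj_im, one_re, one_im]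
  ring

lemma mapsTo_diskAut (ha : a ∈ unitDisk) : MapsTo (diskAut a) unitDisk unitDisk := by
  intro w hw
  have hprod := mul_pos (one_sub_norm_sq_pos_s7 ha) (one_sub_norm_sq_pos_s7 hw)
  rw [← normSq_eq_norm_sq, ← normSq_eq_norm_sq,
    ← normSq_one_sub_conj_mul_sub_normSq_sub] at hprod
  rw [mem_unitDisk, diskAut, norm_div, div_lt_one (norm_pos_iff.2 (one_sub_conj_mul_ne_zero ha hw)),
    ← sq_lt_sq₀ (norm_nonneg _) (norm_nonneg _), ← normSq_eq_norm_sq, ← normSq_eq_norm_sq]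
  linarith

lemma hasDerivAt_diskAut (ha : a ∈ unitDisk) (hw : w ∈ unitDisk) :
    HasDerivAt (diskAut a) ((conj a * a - 1) / (1 - conj a * w) ^ 2) w := by
  have hnum : HasDerivAt (fun w => a - w) (-1) w := by
    simpa using (hasDerivAt_id w).const_sub a
  have hden : HasDerivAt (fun w => 1 - conj a * w) (-conj a) w := by
    simpa using ((hasDerivAt_id w).const_mul (conj a)).const_sub 1
  rw [show conj a * a - 1 = -1 * (1 - conj a * w) - (a - w) * -conj a by ring]
  exact hnum.div hden (one_sub_conj_mul_ne_zero ha hw)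

lemma differentiableOn_diskAut (ha : a ∈ unitDisk) : DifferentiableOn ℂ (diskAut a) unitDisk :=
  fun _ hw => (hasDerivAt_diskAut ha hw).differentiableAt.differentiableWithinAt

end DiskAutomorphism

/-- Schwarz–Pick: apply the Schwarz lemma to `diskAut (ω z) ∘ ω ∘ diskAut z`, which fixes `0`. -/
theorem one_sub_norm_sq_mul_norm_deriv_le {ω : ℂ → ℂ} (hd : DifferentiableOn ℂ ω unitDisk)
    (hm : MapsTo ω unitDisk unitDisk) {z : ℂ} (hz : z ∈ unitDisk) :
    (1 - ‖z‖ ^ 2) * ‖deriv ω z‖ ≤ 1 - ‖ω z‖ ^ 2 := by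
  set b := ω z with hb_def
  have hb : b ∈ unitDisk := hm hz
  set F := diskAut b ∘ ω ∘ diskAut z
  have hF_diff : DifferentiableOn ℂ F (ball 0 1) :=
    (differentiableOn_diskAut hb).comp (hd.comp (differentiableOn_diskAut hz) (mapsTo_diskAut hz))
      (hm.comp (mapsTo_diskAut hz))
  have hF_maps : MapsTo F (ball 0 1) (closedBall (F 0) 1) := by
    have hF0 : F 0 = 0 := by simp [F, ← hb_def]
    rw [hF0]
    exact ((mapsTo_diskAut hb).comp (hm.comp (mapsTo_diskAut hz))).mono_right
      ball_subset_closedBall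
  have hschwarz : ‖deriv F 0‖ ≤ 1 := norm_deriv_le_one_of_mapsTo_ball hF_diff hF_maps one_pos
  have h0 : (0 : ℂ) ∈ unitDisk := mem_ball_self one_pos
  have hω : HasDerivAt ω (deriv ω z) (diskAut z 0) := by
    rw [diskAut_zero]
    exact (hd.differentiableAt (isOpen_unitDisk.mem_nhds hz)).hasDerivAt
  have hb' : HasDerivAt (diskAut b) ((conj b * b - 1) / (1 - conj b * b) ^ 2)
      (ω (diskAut z 0)) := by
    rw [diskAut_zero]
    exact hasDerivAt_diskAut hb hb
  have hpos := one_sub_norm_sq_pos_s7 hb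
  have hne : (1 - (‖b‖ : ℂ) ^ 2) ≠ 0 := by exact_mod_cast hpos.ne'
  have hderiv : deriv F 0 = (((1 - ‖z‖ ^ 2) / (1 - ‖b‖ ^ 2) : ℝ) : ℂ) * deriv ω z := by
    rw [(hb'.comp 0 (hω.comp 0 (hasDerivAt_diskAut hz h0))).deriv, conj_mul', conj_mul']
    push_cast
    field_simp
    ring
  rw [hderiv, norm_mul, norm_real, Real.norm_of_nonneg (div_nonneg (one_sub_norm_sq_pos_s7 hz).le
    hpos.le), div_mul_eq_mul_div, div_le_one hpos] at hschwarz
  exact hschwarz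

lemma one_sub_norm_sq_mul_norm_conj_mul_deriv_div_le_one {ω : ℂ → ℂ}
    (hd : DifferentiableOn ℂ ω unitDisk) (hm : MapsTo ω unitDisk unitDisk) {z : ℂ}
    (hz : z ∈ unitDisk) :
    (1 - ‖z‖ ^ 2) * ‖conj (ω z) * deriv ω z / ((1 - ‖ω z‖ ^ 2 : ℝ) : ℂ)‖ ≤ 1 := by
  have hpos := one_sub_norm_sq_pos_s7 (hm hz)
  have hω1 : ‖ω z‖ ≤ 1 := (mem_unitDisk.1 (hm hz)).le
  have hpick := one_sub_norm_sq_mul_norm_deriv_le hd hm hz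
  rw [norm_div, norm_mul, RCLike.norm_conj, norm_real, Real.norm_of_nonneg hpos.le,
    mul_div_assoc', div_le_one hpos]
  calc (1 - ‖z‖ ^ 2) * (‖ω z‖ * ‖deriv ω z‖) = ‖ω z‖ * ((1 - ‖z‖ ^ 2) * ‖deriv ω z‖) := by ring
    _ ≤ 1 * (1 - ‖ω z‖ ^ 2) := by have := (one_sub_norm_sq_pos_s7 hz).le; gcongr
    _ = 1 - ‖ω z‖ ^ 2 := one_mul _

lemma abs_one_sub_norm_sq_mul_norm_logPreSch_sub_le (h g : ℂ → ℂ) {ω : ℂ → ℂ}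
    (hd : DifferentiableOn ℂ ω unitDisk) (hm : MapsTo ω unitDisk unitDisk) {z : ℂ}
    (hz : z ∈ unitDisk) :
    |(1 - ‖z‖ ^ 2) * ‖logPreSch h g ω z‖ - (1 - ‖z‖ ^ 2) * ‖deriv (deriv h) z / deriv h z‖| ≤
      (1 - ‖z‖ ^ 2) * ‖deriv g z / g z‖ + 1 := by
  have ht := one_sub_norm_sq_pos_s7 hz
  have hsub : logPreSch h g ω z - deriv (deriv h) z / deriv h z =
      deriv g z / g z - conj (ω z) * deriv ω z / ((1 - ‖ω z‖ ^ 2 : ℝ) : ℂ) := by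
    rw [logPreSch]; ring
  calc |(1 - ‖z‖ ^ 2) * ‖logPreSch h g ω z‖ - (1 - ‖z‖ ^ 2) * ‖deriv (deriv h) z / deriv h z‖|
      = (1 - ‖z‖ ^ 2) * |‖logPreSch h g ω z‖ - ‖deriv (deriv h) z / deriv h z‖| := by
        rw [← mul_sub, abs_mul, abs_of_pos ht]
    _ ≤ (1 - ‖z‖ ^ 2) * ‖logPreSch h g ω z - deriv (deriv h) z / deriv h z‖ := by
        gcongr; exact abs_norm_sub_norm_le _ _
    _ ≤ (1 - ‖z‖ ^ 2) * ‖deriv g z / g z‖ +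
          (1 - ‖z‖ ^ 2) * ‖conj (ω z) * deriv ω z / ((1 - ‖ω z‖ ^ 2 : ℝ) : ℂ)‖ := by
        rw [hsub, ← mul_add]; gcongr; exact norm_sub_le _ _
    _ ≤ (1 - ‖z‖ ^ 2) * ‖deriv g z / g z‖ + 1 := by
        gcongr; exact one_sub_norm_sq_mul_norm_conj_mul_deriv_div_le_one hd hm hz

section SupOfImage

variable {α : Type*} {s : Set α} {f g : α → ℝ} {c : ℝ}

lemma setOf_exists_mem_eq_eq_image (s : Set α) (f : α → ℝ) :
    {r | ∃ x ∈ s, r = f x} = f '' s := by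
  ext; simp [eq_comm]

lemma BddAbove.image_of_le_add (hg : BddAbove (g '' s)) (h : ∀ x ∈ s, f x ≤ g x + c) :
    BddAbove (f '' s) := by
  obtain ⟨C, hC⟩ := hg
  refine ⟨C + c, forall_mem_image.2 fun x hx => ?_⟩
  linarith [h x hx, hC (mem_image_of_mem g hx)]

lemma csSup_image_le_csSup_image_add (hs : s.Nonempty) (hg : BddAbove (g '' s))
    (h : ∀ x ∈ s, f x ≤ g x + c) : sSup (f '' s) ≤ sSup (g '' s) + c :=
  csSup_le (hs.image f) <| forall_mem_image.2 fun x hx =>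
    (h x hx).trans (add_le_add_left (le_csSup hg (mem_image_of_mem g hx)) c)

lemma bddAbove_image_iff_of_abs_sub_le (h : ∀ x ∈ s, |f x - g x| ≤ c) :
    BddAbove (f '' s) ↔ BddAbove (g '' s) :=
  ⟨fun hf => hf.image_of_le_add fun x hx => by linarith [(abs_le.1 (h x hx)).1],
    fun hg => hg.image_of_le_add fun x hx => by linarith [(abs_le.1 (h x hx)).2]⟩

lemma abs_csSup_image_sub_csSup_image_le (hs : s.Nonempty) (hg : BddAbove (g '' s))
    (h : ∀ x ∈ s, |f x - g x| ≤ c) : |sSup (f '' s) - sSup (g '' s)| ≤ c := by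
  have hf := (bddAbove_image_iff_of_abs_sub_le h).2 hg
  rw [abs_sub_le_iff]
  constructor
  · linarith [csSup_image_le_csSup_image_add (f := f) (c := c) hs hg fun x hx => by
      linarith [(abs_le.1 (h x hx)).2]]
  · linarith [csSup_image_le_csSup_image_add (f := g) (c := c) hs hf fun x hx => by
      linarith [(abs_le.1 (h x hx)).1]]

end SupOfImage

theorem preSchwarzian_f_vs_h_general (h g ω : ℂ → ℂ)
    (hh : DifferentiableOn ℂ h unitDisk) (hh' : DifferentiableOn ℂ (deriv h) unitDisk)
    (hg : DifferentiableOn ℂ g unitDisk)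
    (hgne : ∀ z ∈ unitDisk, g z ≠ 0)
    (hh'ne : ∀ z ∈ unitDisk, deriv h z ≠ 0)
    (hωdef : ∀ z ∈ unitDisk, ω z = deriv g z * h z / (g z * deriv h z))
    (hωmap : ∀ z ∈ unitDisk, ω z ∈ unitDisk)
    (hBloch : BddAbove {r | ∃ z ∈ unitDisk,
        r = (1 - ‖z‖ ^ 2) * (‖deriv h z / h z‖ + ‖deriv g z / g z‖)}) :
    (BddAbove (normSet (logPreSch h g ω)) ↔
        BddAbove (normSet (fun z => deriv (deriv h) z / deriv h z))) ∧
      (BddAbove (normSet (fun z => deriv (deriv h) z / deriv h z)) →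
        |sSup (normSet (logPreSch h g ω)) -
            sSup (normSet (fun z => deriv (deriv h) z / deriv h z))| ≤
          sSup {r | ∃ z ∈ unitDisk, r = (1 - ‖z‖ ^ 2) * ‖deriv g z / g z‖} + 1) := by
  have hω : DifferentiableOn ℂ ω unitDisk :=
    (((hg.deriv isOpen_unitDisk).mul hh).div (hg.mul hh')
      fun z hz => mul_ne_zero (hgne z hz) (hh'ne z hz)).congr hωdef
  simp only [normSet, setOf_exists_mem_eq_eq_image] at hBloch ⊢
  have hβ : BddAbove ((fun z => (1 - ‖z‖ ^ 2) * ‖deriv g z / g z‖) '' unitDisk) :=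
    hBloch.image_of_le_add (c := 0) fun z hz => by
      have := (one_sub_norm_sq_pos_s7 hz).le
      rw [add_zero]
      gcongr
      exact le_add_of_nonneg_left (norm_nonneg _)
  have hkey : ∀ z ∈ unitDisk,
      |(1 - ‖z‖ ^ 2) * ‖logPreSch h g ω z‖ - (1 - ‖z‖ ^ 2) * ‖deriv (deriv h) z / deriv h z‖| ≤
        sSup ((fun z => (1 - ‖z‖ ^ 2) * ‖deriv g z / g z‖) '' unitDisk) + 1 := fun z hz =>
    (abs_one_sub_norm_sq_mul_norm_logPreSch_sub_le h g hω hωmap hz).trans <|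
      add_le_add_left (le_csSup hβ (mem_image_of_mem _ hz)) 1
  exact ⟨bddAbove_image_iff_of_abs_sub_le hkey,
    fun hB => abs_csSup_image_sub_csSup_image_le ⟨0, mem_ball_self one_pos⟩ hB hkey⟩

/-- For a nonvanishing logharmonic Bloch mapping `f = h ⬝ conj g`, the pre-Schwarzian norm
`‖P_f‖` is finite iff `‖P_h‖` is finite, and then `| ‖P_f‖ − ‖P_h‖ | ≤ β_{log g} + 1`. -/
theorem preSchwarzian_f_vs_h (h g ω : ℂ → ℂ)
    (hh : DifferentiableOn ℂ h unitDisk) (hh' : DifferentiableOn ℂ (deriv h) unitDisk)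
    (hg : DifferentiableOn ℂ g unitDisk)
    (hhne : ∀ z ∈ unitDisk, h z ≠ 0) (hgne : ∀ z ∈ unitDisk, g z ≠ 0)
    (hh'ne : ∀ z ∈ unitDisk, deriv h z ≠ 0)
    (hωdef : ∀ z ∈ unitDisk, ω z = deriv g z * h z / (g z * deriv h z))
    (hωmap : ∀ z ∈ unitDisk, ω z ∈ unitDisk)
    (hBloch : BddAbove {r | ∃ z ∈ unitDisk,
        r = (1 - ‖z‖ ^ 2) * (‖deriv h z / h z‖ + ‖deriv g z / g z‖)}) :
    (BddAbove (normSet (logPreSch h g ω)) ↔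
        BddAbove (normSet (fun z => deriv (deriv h) z / deriv h z))) ∧
      (BddAbove (normSet (fun z => deriv (deriv h) z / deriv h z)) →
        |sSup (normSet (logPreSch h g ω)) -
            sSup (normSet (fun z => deriv (deriv h) z / deriv h z))| ≤
          sSup {r | ∃ z ∈ unitDisk, r = (1 - ‖z‖ ^ 2) * ‖deriv g z / g z‖} + 1) :=
  preSchwarzian_f_vs_h_general h g ω hh hh' hg hgne hh'ne hωdef hωmap hBloch
end

section
/- For z ∈ 𝔻 define P(z) = 3/(1−z) − z̄/(1−|z|²). Then sup_{z∈𝔻}(1−|z|²)|P(z)| = 5. -/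
open Complex Metric Set

/-!
Substituting `z̄ = 1 - conj (1 - z)` into `3 (1 - |z|²) / (1 - z) - z̄` gives
`(1 - |z|²) P(z) = 3 conj (1 - z) / (1 - z) + 2 z̄`. The first term has modulus `3`, so the
triangle inequality bounds the weighted modulus by `3 + 2|z| < 5`, with equality on `[0, 1)`.
-/

noncomputable def preSchwarzian (z : ℂ) : ℂ :=
  3 / (1 - z) - (starRingEnd ℂ) z / ((1 - ‖z‖ ^ 2 : ℝ) : ℂ)

lemma one_sub_sq_norm_mul_preSchwarzian {z : ℂ} (hz : z ≠ 1) (hnorm : ‖z‖ ≠ 1) :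
    ((1 - ‖z‖ ^ 2 : ℝ) : ℂ) * preSchwarzian z =
      3 * (starRingEnd ℂ) (1 - z) / (1 - z) + 2 * (starRingEnd ℂ) z := by
  have hsub : (1 : ℂ) - z ≠ 0 := sub_ne_zero.mpr hz.symm
  have hweight : ((1 - ‖z‖ ^ 2 : ℝ) : ℂ) ≠ 0 := by
    have : ‖z‖ ^ 2 ≠ 1 := (pow_eq_one_iff_of_nonneg (norm_nonneg z) two_ne_zero).not.mpr hnorm
    exact_mod_cast sub_ne_zero.mpr this.symm
  have hconj : (starRingEnd ℂ) z * z = ((‖z‖ ^ 2 : ℝ) : ℂ) := by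
    rw [mul_comm, mul_conj, normSq_eq_norm_sq]
  rw [preSchwarzian, map_sub, map_one]
  field_simp
  push_cast at hconj ⊢
  linear_combination 3 * hconj

lemma one_sub_sq_norm_mul_norm_preSchwarzian_le {z : ℂ} (hz : ‖z‖ < 1) :
    (1 - ‖z‖ ^ 2) * ‖preSchwarzian z‖ ≤ 3 + 2 * ‖z‖ := by
  have hz1 : z ≠ 1 := by rintro rfl; simp at hz
  have hpos : 0 < 1 - ‖z‖ ^ 2 := by nlinarith [norm_nonneg z]
  calc (1 - ‖z‖ ^ 2) * ‖preSchwarzian z‖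
      = ‖((1 - ‖z‖ ^ 2 : ℝ) : ℂ) * preSchwarzian z‖ := by
        rw [norm_mul, norm_real, Real.norm_of_nonneg hpos.le]
    _ = ‖3 * (starRingEnd ℂ) (1 - z) / (1 - z) + 2 * (starRingEnd ℂ) z‖ := by
        rw [one_sub_sq_norm_mul_preSchwarzian hz1 hz.ne]
    _ ≤ 3 + 2 * ‖z‖ := by
        refine (norm_add_le _ _).trans_eq ?_
        rw [mul_div_assoc, norm_mul, norm_mul, norm_div, Complex.norm_conj, Complex.norm_conj,
          div_self (norm_ne_zero_iff.mpr (sub_ne_zero.mpr hz1.symm))]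
        norm_num

lemma one_sub_sq_mul_norm_preSchwarzian_ofReal {t : ℝ} (ht₀ : 0 ≤ t) (ht₁ : t < 1) :
    (1 - t ^ 2) * ‖preSchwarzian t‖ = 3 + 2 * t := by
  have key := one_sub_sq_norm_mul_preSchwarzian (z := t) (by exact_mod_cast ht₁.ne)
    (by simpa [abs_of_nonneg ht₀] using ht₁.ne)
  have hsub : ((1 - t : ℝ) : ℂ) ≠ 0 := by exact_mod_cast sub_ne_zero.mpr ht₁.ne'
  rw [norm_real, Real.norm_of_nonneg ht₀, ← ofReal_one, ← ofReal_sub, conj_ofReal,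
    conj_ofReal, mul_div_assoc, div_self hsub] at key
  have hpos : 0 ≤ 1 - t ^ 2 := by nlinarith
  rw [← Real.norm_of_nonneg hpos, ← norm_real, ← norm_mul, key]
  exact_mod_cast Real.norm_of_nonneg (by linarith)

/-- For `P(z) = 3/(1−z) − conj z/(1−|z|²)`, one has `sup (1−|z|²)|P(z)| = 5`. -/
theorem preSchwarzian_norm_eq_five' :
    sSup {r | ∃ z ∈ unitDisk,
        r = (1 - ‖z‖ ^ 2) *
          ‖3 / (1 - z) - (starRingEnd ℂ) z / ((1 - ‖z‖ ^ 2 : ℝ) : ℂ)‖} = 5 := by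
  change sSup {r | ∃ z ∈ unitDisk, r = (1 - ‖z‖ ^ 2) * ‖preSchwarzian z‖} = 5
  refine IsLUB.csSup_eq ((isLUB_Ico (by norm_num : (3 : ℝ) < 5)).of_subset_of_superset
    isLUB_Iic ?_ ?_) ⟨_, 0, by simp [unitDisk], rfl⟩
  · rintro r ⟨hr₃, hr₅⟩
    refine ⟨((r - 3) / 2 : ℝ), ?_, ?_⟩
    · simp only [unitDisk, mem_ball, dist_zero_right, norm_real, Real.norm_eq_abs, abs_lt]
      constructor <;> linarith
    · rw [norm_real, Real.norm_of_nonneg (by linarith),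
        one_sub_sq_mul_norm_preSchwarzian_ofReal (by linarith) (by linarith)]
      ring
  · rintro r ⟨z, hz, rfl⟩
    have hz : ‖z‖ < 1 := by simpa [unitDisk] using hz
    exact (one_sub_sq_norm_mul_norm_preSchwarzian_le hz).trans (by linarith)
end
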